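/- Let α ≥ 0 and β ∈ R satisfy 2α − 4 < β < 2α − 1 and set θ = (α+β+1)/2 ≠ 0. Then there exists a constant C > 0 depending only on α and β such that for every positive C^2 function ρ on the one-dimensional torus, ∫_T |∂_xx(ρ^θ)|^2 dx + ∫_T |∂_x(ρ^{θ/2})|^4 dx ≤ C·D_{α,β}[ρ], where D_{α,β}[ρ] = ∫_T ( (4/(α+β+1)^2)|∂_xx ρ^{(α+β+1)/2}|^2 + c(α,β)|∂_x ρ^{(α+β+1)/4}|^4 ) dx with c(α,β) = (64/(α+β+1)^2)[ (α−β−1)(1−α)/(α+β+1)^2 − β/(3(α+β+1)) ]. -/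

import Mathlib

/-!
Write `s = α + β + 1` and `v = ρ ^ (s / 4)`, so that `ρ ^ (s / 2) = v²` and
`(v²)'' = 2 (v'² + v v'')`. Integrating the exact derivative `(v v'³)' = v'⁴ + 3 v v'² v''`
over a period and completing a square gives Bernis' inequality `∫ v'⁴ ≤ 9/16 ∫ |(v²)''|²`.
A negative quartic coefficient `c` can therefore be absorbed by the first term, and what is
left is positive because `4 / s² + 9/16 c = 8 (2α - β - 1) (β - 2α + 4) / s⁴`: this is
exactly the strict strong coercivity condition.
-/

open intervalIntegral

theorem Function.Periodic.deriv {𝕜 F : Type*} [NontriviallyNormedField 𝕜]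
    [NormedAddCommGroup F] [NormedSpace 𝕜 F] {f : 𝕜 → F} {c : 𝕜} (hf : Function.Periodic f c) :
    Function.Periodic (deriv f) c := fun x => by
  rw [← deriv_comp_add_const, show (fun y => f (y + c)) = f from funext hf]

section BernisInequality

variable {v : ℝ → ℝ}

theorem deriv_deriv_sq (hv : Differentiable ℝ v) (hv' : Differentiable ℝ (deriv v)) (x : ℝ) :
    deriv (deriv fun y => v y ^ 2) x = 2 * (deriv v x ^ 2 + v x * deriv (deriv v) x) := by
  have h₁ : deriv (fun y => v y ^ 2) = fun y => 2 * (v y * deriv v y) := funext fun y => by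
    rw [deriv_fun_pow (hv y)]; ring
  rw [h₁, (((hv x).hasDerivAt.fun_mul (hv' x).hasDerivAt).const_mul 2).deriv]
  ring

theorem integral_deriv_pow_four_le {a b : ℝ} (hv : ContDiff ℝ 2 v) (hab : a ≤ b)
    (hva : v a = v b) (hv'a : deriv v a = deriv v b) :
    ∫ x in a..b, deriv v x ^ 4
      ≤ 9 / 4 * ∫ x in a..b, (deriv v x ^ 2 + v x * deriv (deriv v) x) ^ 2 := by
  have hd := hv.differentiable two_ne_zero
  have hd' := hv.differentiable_deriv_two
  have hc := hv.continuous
  have hc' := hv.continuous_deriv one_le_two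
  have hc'' : Continuous (deriv (deriv v)) := (hv.deriv' (n := 1)).continuous_deriv le_rfl
  have hexact :
      ∫ x in a..b, (deriv v x ^ 4 + 3 * v x * deriv v x ^ 2 * deriv (deriv v) x) = 0 := by
    rw [integral_eq_sub_of_hasDerivAt (f := fun x => v x * deriv v x ^ 3), hva, hv'a, sub_self]
    · intro x _
      refine ((hd x).hasDerivAt.fun_mul ((hd' x).hasDerivAt.fun_pow 3)).congr_deriv ?_
      push_cast
      ring
    · apply Continuous.intervalIntegrable; fun_prop
  have hsq : 0 ≤ ∫ x in a..b, (deriv v x ^ 2 + 3 * v x * deriv (deriv v) x) ^ 2 :=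
    integral_nonneg hab fun x _ => sq_nonneg _
  -- `9 W² - 4 v'⁴ = (v'² + 3 v v'')² + 4 (v v'³)'` for `W = v'² + v v''`
  have hsplit : 9 / 4 * (∫ x in a..b, (deriv v x ^ 2 + v x * deriv (deriv v) x) ^ 2)
        - ∫ x in a..b, deriv v x ^ 4
      = 1 / 4 * (∫ x in a..b, (deriv v x ^ 2 + 3 * v x * deriv (deriv v) x) ^ 2)
        + ∫ x in a..b, (deriv v x ^ 4 + 3 * v x * deriv v x ^ 2 * deriv (deriv v) x) := by
    rw [← integral_const_mul, ← integral_const_mul, ← integral_sub, ← integral_add]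
    · congr 1; ext x; ring
    all_goals apply Continuous.intervalIntegrable; fun_prop
  linarith

theorem integral_abs_deriv_pow_four_le_deriv_deriv_sq {a b : ℝ} (hv : ContDiff ℝ 2 v)
    (hab : a ≤ b) (hva : v a = v b) (hv'a : deriv v a = deriv v b) :
    ∫ x in a..b, |deriv v x| ^ 4
      ≤ 9 / 16 * ∫ x in a..b, |deriv (deriv fun y => v y ^ 2) x| ^ 2 := by
  have h₄ (x : ℝ) : |deriv v x| ^ 4 = deriv v x ^ 4 := (even_two_mul 2).pow_abs _
  have h₂ (x : ℝ) : |deriv (deriv fun y => v y ^ 2) x| ^ 2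
      = 4 * (deriv v x ^ 2 + v x * deriv (deriv v) x) ^ 2 := by
    rw [sq_abs, deriv_deriv_sq (hv.differentiable two_ne_zero) hv.differentiable_deriv_two]
    ring
  simp_rw [h₄, h₂, integral_const_mul]
  linarith [integral_deriv_pow_four_le hv hab hva hv'a]

end BernisInequality

theorem add_le_div_min_mul {A B k c₁ c₂ : ℝ} (hk : 0 < k) (hB : 0 ≤ B) (hBA : B ≤ k * A)
    (hc₁ : 0 < c₁) (hc : 0 < c₁ + k * c₂) :
    A + B ≤ (1 + k) / min c₁ (c₁ + k * c₂) * (c₁ * A + c₂ * B) := by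
  have hA : 0 ≤ A := (mul_nonneg_iff_of_pos_left hk).1 (hB.trans hBA)
  have hκ : 0 < min c₁ (c₁ + k * c₂) := lt_min hc₁ hc
  have hκA : min c₁ (c₁ + k * c₂) * A ≤ c₁ * A + c₂ * B := by
    rcases le_total 0 c₂ with hc₂ | hc₂
    · nlinarith [min_le_left c₁ (c₁ + k * c₂)]
    · nlinarith [min_le_right c₁ (c₁ + k * c₂)]
  calc A + B ≤ (1 + k) / min c₁ (c₁ + k * c₂) * (min c₁ (c₁ + k * c₂) * A) := by
        rw [← mul_assoc, div_mul_cancel₀ _ hκ.ne']; linarith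
    _ ≤ (1 + k) / min c₁ (c₁ + k * c₂) * (c₁ * A + c₂ * B) := by gcongr

theorem dissipation_coeff_pos {α β : ℝ} (h₁ : 2 * α - 4 < β) (h₂ : β < 2 * α - 1)
    (hs : α + β + 1 ≠ 0) :
    0 < 4 / (α + β + 1) ^ 2 + 9 / 16 * (64 / (α + β + 1) ^ 2 *
      ((α - β - 1) * (1 - α) / (α + β + 1) ^ 2 - β / (3 * (α + β + 1)))) := by
  have hfactor : 4 / (α + β + 1) ^ 2 + 9 / 16 * (64 / (α + β + 1) ^ 2 *
      ((α - β - 1) * (1 - α) / (α + β + 1) ^ 2 - β / (3 * (α + β + 1))))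
      = 8 * (2 * α - β - 1) * (β - 2 * α + 4) / (α + β + 1) ^ 4 := by
    field_simp
    ring
  rw [hfactor]
  have : 0 < 2 * α - β - 1 := by linarith
  have : 0 < β - 2 * α + 4 := by linarith
  positivity

theorem coercivity_of_dissipation_general (α β : ℝ)
    (h1 : 2 * α - 4 < β) (h2 : β < 2 * α - 1)
    (hθ : (α + β + 1) / 2 ≠ 0) :
    ∃ C : ℝ, 0 < C ∧ ∀ ρ : ℝ → ℝ, Function.Periodic ρ 1 → (∀ x, 0 < ρ x) →
      ContDiff ℝ 2 ρ →
      (∫ x in (0:ℝ)..1, |deriv (deriv (fun y => ρ y ^ ((α + β + 1) / 2))) x| ^ 2)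
        + (∫ x in (0:ℝ)..1, |deriv (fun y => ρ y ^ ((α + β + 1) / 4)) x| ^ 4)
      ≤ C * ∫ x in (0:ℝ)..1,
          ((4 / (α + β + 1) ^ 2) *
              |deriv (deriv (fun y => ρ y ^ ((α + β + 1) / 2))) x| ^ 2
            + ((64 / (α + β + 1) ^ 2) *
                ((α - β - 1) * (1 - α) / (α + β + 1) ^ 2 - β / (3 * (α + β + 1)))) *
              |deriv (fun y => ρ y ^ ((α + β + 1) / 4)) x| ^ 4) := by
  have hs : α + β + 1 ≠ 0 := fun h => hθ (by rw [h, zero_div])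
  set c₁ := 4 / (α + β + 1) ^ 2
  set c₂ := 64 / (α + β + 1) ^ 2 *
    ((α - β - 1) * (1 - α) / (α + β + 1) ^ 2 - β / (3 * (α + β + 1)))
  have hc₁ : 0 < c₁ := by positivity
  have hc : 0 < c₁ + 9 / 16 * c₂ := dissipation_coeff_pos h1 h2 hs
  refine ⟨(1 + 9 / 16) / min c₁ (c₁ + 9 / 16 * c₂), by positivity,
    fun ρ hρ hpos hρ₂ => ?_⟩
  set v := fun y => ρ y ^ ((α + β + 1) / 4)
  have hv : ContDiff ℝ 2 v := hρ₂.rpow_const_of_ne fun x => (hpos x).ne'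
  have hv₁ : Function.Periodic v 1 := fun y => by simp only [v, hρ y]
  have hsq : (fun y => ρ y ^ ((α + β + 1) / 2)) = fun y => v y ^ 2 := funext fun y => by
    rw [← Real.rpow_mul_natCast (hpos y).le]
    ring_nf
  have hv'' : Continuous (deriv (deriv fun y => v y ^ 2)) :=
    ((hv.pow 2).deriv' (n := 1)).continuous_deriv le_rfl
  rw [hsq, integral_add, integral_const_mul, integral_const_mul]
  · refine add_le_div_min_mul (by norm_num) ?_ ?_ hc₁ hc
    · exact integral_nonneg zero_le_one fun x _ => by positivity
    · exact integral_abs_deriv_pow_four_le_deriv_deriv_sq hv zero_le_one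
        (by simpa using (hv₁ 0).symm) (by simpa using (hv₁.deriv 0).symm)
  all_goals apply Continuous.intervalIntegrable
  · exact continuous_const.mul (hv''.abs.pow 2)
  · exact continuous_const.mul ((hv.continuous_deriv one_le_two).abs.pow 4)

/-- Under the strict strong coercivity condition `2α−4 < β < 2α−1` with `α ≥ 0`
and `θ = (α+β+1)/2 ≠ 0`, there is a constant `C > 0` depending only on `α, β`
such that for every positive `C²` function `ρ` on the torus,
`∫ |∂ₓₓ(ρ^θ)|² + ∫ |∂ₓ(ρ^{θ/2})|⁴ ≤ C · D_{α,β}[ρ]`. -/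
theorem coercivity_of_dissipation (α β : ℝ) (hα : 0 ≤ α)
    (h1 : 2 * α - 4 < β) (h2 : β < 2 * α - 1)
    (hθ : (α + β + 1) / 2 ≠ 0) :
    ∃ C : ℝ, 0 < C ∧ ∀ ρ : ℝ → ℝ, Function.Periodic ρ 1 → (∀ x, 0 < ρ x) →
      ContDiff ℝ 2 ρ →
      (∫ x in (0:ℝ)..1, |deriv (deriv (fun y => ρ y ^ ((α + β + 1) / 2))) x| ^ 2)
        + (∫ x in (0:ℝ)..1, |deriv (fun y => ρ y ^ ((α + β + 1) / 4)) x| ^ 4)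
      ≤ C * ∫ x in (0:ℝ)..1,
          ((4 / (α + β + 1) ^ 2) *
              |deriv (deriv (fun y => ρ y ^ ((α + β + 1) / 2))) x| ^ 2
            + ((64 / (α + β + 1) ^ 2) *
                ((α - β - 1) * (1 - α) / (α + β + 1) ^ 2 - β / (3 * (α + β + 1)))) *
              |deriv (fun y => ρ y ^ ((α + β + 1) / 4)) x| ^ 4) :=
  coercivity_of_dissipation_general α β h1 h2 hθ
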